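/- For fixed k and p ∈ (0,1), the map α ↦ (m(1,p,α),…,m(k,p,α)) from (0,1) to ℕ^k is a step function taking finitely many values, and restricted to its image, the mass function L₁ is injective; hence composing gives a monotone non-decreasing integer-valued step function α ↦ L₁(α) whose value determines the entire mTable. -/
import Mathlib


/-- Binomial CDF: F(m; i, p) = ∑_{j=0}^m C(i,j) p^j (1-p)^{i-j}. -/
noncomputable def binCDF (i : ℕ) (p : ℝ) (m : ℕ) : ℝ :=
  ∑ j ∈ Finset.range (m + 1), (i.choose j : ℝ) * p ^ j * (1 - p) ^ (i - j)

/-- Binomial quantile: least m with F(m; i, p) ≥ α. -/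
noncomputable def quantile (i : ℕ) (p α : ℝ) : ℕ :=
  sInf {m : ℕ | α ≤ binCDF i p m}

lemma binCDF_self (i : ℕ) (p : ℝ) : binCDF i p i = 1 := by
  have h : binCDF i p i = (p + (1 - p)) ^ i := by
    rw [add_pow, binCDF]
    exact Finset.sum_congr rfl fun j _ => by ring
  simp at h
  simpa using h

lemma mem_quantile_set (i : ℕ) (p α : ℝ) (hα : α ≤ 1) :
    i ∈ {m : ℕ | α ≤ binCDF i p m} := by
  simp [binCDF_self, hα]

lemma quantile_le (i : ℕ) (p α : ℝ) (hα : α ≤ 1) : quantile i p α ≤ i :=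
  Nat.sInf_le (mem_quantile_set i p α hα)

lemma quantile_mono (i : ℕ) (p α₁ α₂ : ℝ) (h : α₁ ≤ α₂) (hα : α₂ ≤ 1) :
    quantile i p α₁ ≤ quantile i p α₂ := by
  apply csInf_le_csInf (OrderBot.bddBelow _) ⟨i, mem_quantile_set i p α₂ hα⟩
  intro m hm
  exact le_trans h hm

/-- The map α ↦ mTable takes finitely many values; the mass is injective on its image;
and the mass is monotone non-decreasing in α. -/
theorem mTable_step_function (k : ℕ) (p : ℝ) (hp0 : 0 < p) (hp1 : p < 1) :
    {v : Fin k → ℕ | ∃ α ∈ Set.Ioo (0 : ℝ) 1, v = fun i => quantile (i.1 + 1) p α}.Finite ∧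
    (∀ α₁ ∈ Set.Ioo (0 : ℝ) 1, ∀ α₂ ∈ Set.Ioo (0 : ℝ) 1,
      (∑ i ∈ Finset.Icc 1 k, quantile i p α₁ = ∑ i ∈ Finset.Icc 1 k, quantile i p α₂) →
      (fun i : Fin k => quantile (i.1 + 1) p α₁) = fun i : Fin k => quantile (i.1 + 1) p α₂) ∧
    (∀ α₁ ∈ Set.Ioo (0 : ℝ) 1, ∀ α₂ ∈ Set.Ioo (0 : ℝ) 1, α₁ ≤ α₂ →
      ∑ i ∈ Finset.Icc 1 k, quantile i p α₁ ≤ ∑ i ∈ Finset.Icc 1 k, quantile i p α₂) := by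
  -- key: if α₁ ≤ α₂ both in (0,1), termwise monotone; equal sums force termwise equality
  have key : ∀ α₁ ∈ Set.Ioo (0 : ℝ) 1, ∀ α₂ ∈ Set.Ioo (0 : ℝ) 1, α₁ ≤ α₂ →
      (∑ i ∈ Finset.Icc 1 k, quantile i p α₁ = ∑ i ∈ Finset.Icc 1 k, quantile i p α₂) →
      ∀ i ∈ Finset.Icc 1 k, quantile i p α₁ = quantile i p α₂ := by
    intro α₁ h₁ α₂ h₂ hle hsum
    have hmono : ∀ i ∈ Finset.Icc 1 k, quantile i p α₁ ≤ quantile i p α₂ := fun i _ =>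
      quantile_mono i p α₁ α₂ hle h₂.2.le
    intro i hi
    exact ((Finset.sum_eq_sum_iff_of_le hmono).mp hsum i hi)
  refine ⟨?_, ?_, ?_⟩
  · apply Set.Finite.subset (Set.finite_Icc (fun _ : Fin k => 0) (fun i : Fin k => i.1 + 1))
    rintro v ⟨α, hα, rfl⟩
    constructor
    · intro i; exact Nat.zero_le _
    · intro i; exact quantile_le _ p α hα.2.le
  · intro α₁ h₁ α₂ h₂ hsum
    funext i
    have hik : i.1 + 1 ∈ Finset.Icc 1 k := by
      simp [Nat.succ_le_iff, i.2]
    rcases le_total α₁ α₂ with h | h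
    · exact key α₁ h₁ α₂ h₂ h hsum _ hik
    · exact (key α₂ h₂ α₁ h₁ h hsum.symm _ hik).symm
  · intro α₁ h₁ α₂ h₂ hle
    exact Finset.sum_le_sum fun i _ => quantile_mono i p α₁ α₂ hle h₂.2.le
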